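/- Let G = G_{4,3} and let F = (f1,f2,f3,f4) ∈ G* ≅ ℝ⁴. If f1 = f2 = 0 then Ω_F(G) = {F}. If f1 = 0 ≠ f2 then Ω_F(G) = { x ∈ ℝ⁴ : x1 = 0, x3 = f3, f2·x2 > 0 } (a 2-dimensional half-plane with x4 free). If f1 ≠ 0 then Ω_F(G) = { x ∈ ℝ⁴ : f1·x1 > 0 } (a 4-dimensional open half-space). -/

import Mathlib

/-!
In the basis `X₁, …, X₄`, the matrix of `ad (a X₁ + β X₂ + c X₃ + d X₄)` has vanishing last two rows
and upper-left block `d I + c E₁₂`, so its powers, and hence its exponential, are explicit: the entries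
are `eᵈ`, `c eᵈ`, `φ(d) = (eᵈ - 1)/d` and `φ'(d)`. Thus `F ∘ exp(ad X)` has first coordinate
`f₁ eᵈ`, second `(f₁ c + f₂) eᵈ` and third `f₃ - f₁ β φ(d)`, while `a` enters the fourth only through
`-f₁ a φ(d)`. Since `φ > 0`, one solves successively for `d`, `c`, `β`, `a`, as far as the vanishing
of `f₁`, `f₂` allows.
-/

open Nat

-- `(eᵈ - 1) / d`, as a power series so that no case split at `d = 0` is needed
noncomputable def phiOne (d : ℝ) : ℝ := ∑' n : ℕ, d ^ n / (n + 1)!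

-- the termwise derivative of `phiOne`
noncomputable def phiOneDeriv (d : ℝ) : ℝ := ∑' n : ℕ, n * d ^ (n - 1) / (n + 1)!

lemma hasSum_phiOne (d : ℝ) : HasSum (fun n : ℕ => d ^ n / (n + 1)!) (phiOne d) := by
  refine Summable.hasSum (Summable.of_norm_bounded (Real.summable_pow_div_factorial |d|) ?_)
  intro n
  rw [Real.norm_eq_abs, abs_div, abs_pow, Nat.abs_cast]
  gcongr
  exact n.le_succ

lemma hasSum_phiOneDeriv (d : ℝ) :
    HasSum (fun n : ℕ => n * d ^ (n - 1) / (n + 1)!) (phiOneDeriv d) := by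
  refine Summable.hasSum ((summable_nat_add_iff 1).mp
    (Summable.of_norm_bounded (Real.summable_pow_div_factorial |d|) ?_))
  intro n
  rw [Real.norm_eq_abs, abs_div, abs_mul, abs_pow, Nat.abs_cast, Nat.abs_cast, Nat.add_sub_cancel,
    div_le_div_iff₀ (by positivity) (by positivity)]
  calc ((n + 1 : ℕ) : ℝ) * |d| ^ n * n ! = |d| ^ n * (n + 1)! := by
        push_cast [Nat.factorial_succ]; ring
    _ ≤ |d| ^ n * (n + 1 + 1)! := by
        gcongr
        exact Nat.le_succ _

lemma hasSum_exp_sub_one (d : ℝ) :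
    HasSum (fun n : ℕ => d ^ (n + 1) / (n + 1)!) (Real.exp d - 1) := by
  rw [Real.exp_eq_exp_ℝ]
  simpa using (hasSum_nat_add_iff' 1).mpr (NormedSpace.expSeries_div_hasSum_exp d)

lemma mul_phiOne (d : ℝ) : d * phiOne d = Real.exp d - 1 := by
  have h := (hasSum_phiOne d).mul_left d
  rw [show (fun n : ℕ => d * (d ^ n / (n + 1)!)) = fun n => d ^ (n + 1) / (n + 1)! by
    funext n; ring] at h
  exact h.unique (hasSum_exp_sub_one d)

lemma phiOne_pos (d : ℝ) : 0 < phiOne d := by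
  rcases lt_trichotomy d 0 with hd | rfl | hd
  · have := Real.exp_lt_one_iff.mpr hd
    nlinarith [mul_phiOne d]
  · rw [phiOne, tsum_eq_single 0 fun n hn => by simp [zero_pow hn]]
    simp
  · nlinarith [mul_phiOne d, Real.add_one_le_exp d]

lemma hasSum_exp (d : ℝ) : HasSum (fun n : ℕ => d ^ n / n !) (Real.exp d) := by
  rw [Real.exp_eq_exp_ℝ]
  exact NormedSpace.expSeries_div_hasSum_exp d

lemma exists_mul_exp_eq {f x : ℝ} (h : 0 < f * x) : ∃ d, f * Real.exp d = x := by
  have hf : f ≠ 0 := left_ne_zero_of_mul h.ne'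
  refine ⟨Real.log (x / f), ?_⟩
  rw [Real.exp_log (div_pos_iff.2 ((mul_pos_iff.1 h).imp And.symm And.symm))]
  field_simp

namespace G43

section
variable {R : Type*} [CommRing R]

def adMatrix (a β c d : R) : Matrix (Fin 4) (Fin 4) R :=
  !![d, c, -β, -a; 0, d, 0, -β; 0, 0, 0, 0; 0, 0, 0, 0]

lemma adMatrix_pow_succ (a β c d : R) (n : ℕ) :
    adMatrix a β c d ^ (n + 1) =
      !![d ^ (n + 1), (n + 1) * c * d ^ n, -β * d ^ n, -(a * d ^ n + n * c * β * d ^ (n - 1));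
        0, d ^ (n + 1), 0, -β * d ^ n; 0, 0, 0, 0; 0, 0, 0, 0] := by
  induction n with
  | zero => ext i j; fin_cases i <;> fin_cases j <;> simp [adMatrix]
  | succ n ih =>
    rw [pow_succ, ih]
    ext i j
    fin_cases i <;> fin_cases j <;> simp [adMatrix, Matrix.mul_apply, Fin.sum_univ_four] <;> ring

end

noncomputable def expAdMatrix (a β c d : ℝ) : Matrix (Fin 4) (Fin 4) ℝ :=
  !![Real.exp d, c * Real.exp d, -β * phiOne d, -(a * phiOne d + c * β * phiOneDeriv d);
     0, Real.exp d, 0, -β * phiOne d; 0, 0, 1, 0; 0, 0, 0, 1]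

lemma exp_adMatrix (a β c d : ℝ) : NormedSpace.exp (adMatrix a β c d) = expAdMatrix a β c d := by
  set J : Matrix (Fin 4) (Fin 4) ℝ := !![1, 0, 0, 0; 0, 1, 0, 0; 0, 0, 0, 0; 0, 0, 0, 0]
  set C : Matrix (Fin 4) (Fin 4) ℝ := !![0, c, 0, 0; 0, 0, 0, 0; 0, 0, 0, 0; 0, 0, 0, 0]
  set K : Matrix (Fin 4) (Fin 4) ℝ := !![0, 0, -β, -a; 0, 0, 0, -β; 0, 0, 0, 0; 0, 0, 0, 0]
  set N : Matrix (Fin 4) (Fin 4) ℝ := !![0, 0, 0, -(c * β); 0, 0, 0, 0; 0, 0, 0, 0; 0, 0, 0, 0]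
  -- each entry of `Mⁿ⁺¹ / (n + 1)!` is a multiple of the `n`-th term of one of four scalar series
  have hterm (n : ℕ) : ((n + 1)! : ℝ)⁻¹ • adMatrix a β c d ^ (n + 1) =
      (d ^ (n + 1) / (n + 1)!) • J + (d ^ n / n !) • C + (d ^ n / (n + 1)!) • K +
        (n * d ^ (n - 1) / (n + 1)!) • N := by
    rw [adMatrix_pow_succ]
    ext i j
    fin_cases i <;> fin_cases j <;> simp [J, C, K, N, Nat.factorial_succ] <;> field_simp
    ring
  have hlim : expAdMatrix a β c d - 1 =
      (Real.exp d - 1) • J + Real.exp d • C + phiOne d • K + phiOneDeriv d • N := by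
    ext i j
    fin_cases i <;> fin_cases j <;> simp [expAdMatrix, J, C, K, N] <;> ring
  have htail : HasSum (fun n : ℕ => ((n + 1)! : ℝ)⁻¹ • adMatrix a β c d ^ (n + 1))
      (expAdMatrix a β c d - 1) := by
    simp_rw [hterm, hlim]
    exact ((((hasSum_exp_sub_one d).smul_const J).add ((hasSum_exp d).smul_const C)).add
      ((hasSum_phiOne d).smul_const K)).add ((hasSum_phiOneDeriv d).smul_const N)
  rw [NormedSpace.exp_eq_tsum ℝ]
  exact ((hasSum_nat_add_iff' 1).mp (by simpa using htail)).tsum_eq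

lemma toMatrix_ad_eq_adMatrix {K L : Type*} [CommRing K] [LieRing L] [LieAlgebra K L]
    (b : Module.Basis (Fin 4) K L)
    (h32 : ⁅b 2, b 1⁆ = b 0) (h41 : ⁅b 3, b 0⁆ = b 0) (h42 : ⁅b 3, b 1⁆ = b 1)
    (h12 : ⁅b 0, b 1⁆ = 0) (h31 : ⁅b 2, b 0⁆ = 0) (h34 : ⁅b 2, b 3⁆ = 0) (a β c d : K) :
    LinearMap.toMatrix b b (LieAlgebra.ad K L (a • b 0 + β • b 1 + c • b 2 + d • b 3)) =
      adMatrix a β c d := by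
  have h21 : ⁅b 1, b 0⁆ = 0 := by rw [← lie_skew, h12, neg_zero]
  have h13 : ⁅b 0, b 2⁆ = 0 := by rw [← lie_skew, h31, neg_zero]
  have h43 : ⁅b 3, b 2⁆ = 0 := by rw [← lie_skew, h34, neg_zero]
  have h23 : ⁅b 1, b 2⁆ = -b 0 := by rw [← lie_skew, h32]
  have h14 : ⁅b 0, b 3⁆ = -b 0 := by rw [← lie_skew, h41]
  have h24 : ⁅b 1, b 3⁆ = -b 1 := by rw [← lie_skew, h42]
  ext i j
  rw [LinearMap.toMatrix_apply, LieAlgebra.ad_apply]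
  fin_cases i <;> fin_cases j <;>
    simp [add_lie, smul_lie, h32, h41, h42, h12, h31, h34, h21, h13, h43, h23, h14, h24,
      adMatrix]

noncomputable def coadjointVec (f : Fin 4 → ℝ) (a β c d : ℝ) : Fin 4 → ℝ :=
  ![f 0 * Real.exp d,
    (f 0 * c + f 1) * Real.exp d,
    -(f 0 * β * phiOne d) + f 2,
    -(f 0 * (a * phiOne d + c * β * phiOneDeriv d)) - f 1 * β * phiOne d + f 3]

lemma vecMul_expAdMatrix (f : Fin 4 → ℝ) (a β c d : ℝ) :
    Matrix.vecMul f (expAdMatrix a β c d) = coadjointVec f a β c d := by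
  ext j
  fin_cases j <;> simp [Matrix.vecMul, dotProduct, Fin.sum_univ_four, expAdMatrix, coadjointVec] <;>
    ring

lemma coadjointOrbit_eq {L : Type*} [LieRing L] [LieAlgebra ℝ L] (b : Module.Basis (Fin 4) ℝ L)
    (h32 : ⁅b 2, b 1⁆ = b 0) (h41 : ⁅b 3, b 0⁆ = b 0) (h42 : ⁅b 3, b 1⁆ = b 1)
    (h12 : ⁅b 0, b 1⁆ = 0) (h31 : ⁅b 2, b 0⁆ = 0) (h34 : ⁅b 2, b 3⁆ = 0) (f : Fin 4 → ℝ) :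
    { y | ∃ X : L,
      y = Matrix.vecMul f (NormedSpace.exp ((LinearMap.toMatrix b b) (LieAlgebra.ad ℝ L X))) } =
      { y | ∃ a β c d : ℝ, y = coadjointVec f a β c d } := by
  have hcoadj (a β c d : ℝ) : Matrix.vecMul f (NormedSpace.exp ((LinearMap.toMatrix b b)
      (LieAlgebra.ad ℝ L (a • b 0 + β • b 1 + c • b 2 + d • b 3)))) = coadjointVec f a β c d := by
    rw [toMatrix_ad_eq_adMatrix b h32 h41 h42 h12 h31 h34, exp_adMatrix, vecMul_expAdMatrix]
  ext y
  constructor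
  · rintro ⟨X, rfl⟩
    have hX : X = b.repr X 0 • b 0 + b.repr X 1 • b 1 + b.repr X 2 • b 2 + b.repr X 3 • b 3 := by
      have := (b.sum_repr X).symm
      rwa [Fin.sum_univ_four] at this
    exact ⟨_, _, _, _, hX ▸ hcoadj _ _ _ _⟩
  · rintro ⟨a, β, c, d, rfl⟩
    exact ⟨_, (hcoadj a β c d).symm⟩

lemma coadjointVec_of_eq_zero {f : Fin 4 → ℝ} (hf0 : f 0 = 0) (hf1 : f 1 = 0) (a β c d : ℝ) :
    coadjointVec f a β c d = f := by
  ext j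
  fin_cases j <;> simp [coadjointVec, hf0, hf1]

lemma setOf_coadjointVec_of_eq_zero {f : Fin 4 → ℝ} (hf0 : f 0 = 0) (hf1 : f 1 = 0) :
    { y | ∃ a β c d : ℝ, y = coadjointVec f a β c d } = {f} := by
  simp [coadjointVec_of_eq_zero hf0 hf1]

lemma setOf_coadjointVec_of_eq_zero_of_ne_zero {f : Fin 4 → ℝ} (hf0 : f 0 = 0) (hf1 : f 1 ≠ 0) :
    { y | ∃ a β c d : ℝ, y = coadjointVec f a β c d } =
      { x | x 0 = 0 ∧ x 2 = f 2 ∧ f 1 * x 1 > 0 } := by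
  ext x
  constructor
  · rintro ⟨a, β, c, d, rfl⟩
    simpa [coadjointVec, hf0, ← mul_assoc] using mul_pos (mul_self_pos.2 hf1) (Real.exp_pos d)
  · rintro ⟨hx0, hx2, hx1⟩
    obtain ⟨d, hd⟩ := exists_mul_exp_eq hx1
    have hφ := (phiOne_pos d).ne'
    refine ⟨0, (f 3 - x 3) / (f 1 * phiOne d), 0, d, ?_⟩
    ext j
    fin_cases j <;> simp [coadjointVec, hf0, hx0, hx2, ← hd]
    field_simp
    ring

lemma setOf_coadjointVec_of_ne_zero {f : Fin 4 → ℝ} (hf0 : f 0 ≠ 0) :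
    { y | ∃ a β c d : ℝ, y = coadjointVec f a β c d } = { x | f 0 * x 0 > 0 } := by
  ext x
  constructor
  · rintro ⟨a, β, c, d, rfl⟩
    simpa [coadjointVec, ← mul_assoc] using mul_pos (mul_self_pos.2 hf0) (Real.exp_pos d)
  · intro hx
    obtain ⟨d, hd⟩ := exists_mul_exp_eq hx
    have hφ := (phiOne_pos d).ne'
    set c := (x 1 / Real.exp d - f 1) / f 0
    set β := (f 2 - x 2) / (f 0 * phiOne d)
    refine ⟨((f 3 - x 3 - f 1 * β * phiOne d) / f 0 - c * β * phiOneDeriv d) / phiOne d, β, c, d, ?_⟩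
    ext j
    fin_cases j <;> simp [coadjointVec, ← hd, c, β] <;> field_simp <;> ring

end G43

/-- coadjoint orbit picture for `G_{4,3}` (`[X3,X2]=X1`, `[X4,X1]=X1`,
`[X4,X2]=X2`). `Ω_F(G) = {F ∘ exp(ad_X) : X ∈ G}` in the coordinates of the dual basis. -/
theorem stmt_13 (L : Type) [LieRing L] [LieAlgebra ℝ L] (b : Module.Basis (Fin 4) ℝ L)
    (h32 : ⁅b 2, b 1⁆ = b 0) (h41 : ⁅b 3, b 0⁆ = b 0) (h42 : ⁅b 3, b 1⁆ = b 1)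
    (h12 : ⁅b 0, b 1⁆ = 0) (h31 : ⁅b 2, b 0⁆ = 0) (h34 : ⁅b 2, b 3⁆ = 0)
    (f : Fin 4 → ℝ) (Ω : Set (Fin 4 → ℝ))
    (hΩ : Ω = { y | ∃ X : L,
      y = Matrix.vecMul f (NormedSpace.exp ((LinearMap.toMatrix b b) (LieAlgebra.ad ℝ L X))) }) :
    (f 0 = 0 ∧ f 1 = 0 → Ω = {f}) ∧
    (f 0 = 0 ∧ f 1 ≠ 0 → Ω = { x | x 0 = 0 ∧ x 2 = f 2 ∧ f 1 * x 1 > 0 }) ∧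
    (f 0 ≠ 0 → Ω = { x | f 0 * x 0 > 0 }) := by
  rw [hΩ, G43.coadjointOrbit_eq b h32 h41 h42 h12 h31 h34]
  exact ⟨fun ⟨hf0, hf1⟩ => G43.setOf_coadjointVec_of_eq_zero hf0 hf1,
    fun ⟨hf0, hf1⟩ => G43.setOf_coadjointVec_of_eq_zero_of_ne_zero hf0 hf1,
    G43.setOf_coadjointVec_of_ne_zero⟩
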